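/- For each integer N ≥ 2 there exist ε₀ > 0, γ₀ > 0, ΔΩ > 0, a neighborhood U ⊆ ℝ^N × ℝ^N of ((1,0,…,0),(0,…,0)), δ > 0, and C^∞ maps (ε,γ,ω) ↦ β*(ε,γ,ω) ∈ ℝ and (ε,γ,ω) ↦ (p*(ε,γ,ω), q*(ε,γ,ω)) ∈ ℝ^N × ℝ^N, defined for |ε| < ε₀, |γ| < γ₀, |ω − 1| < ΔΩ, such that: (p*, q*)(0,0,1) = ((1,0,…,0),(0,…,0)); q*₁(ε,γ,ω) = 0; (p*, q*)(ε,γ,ω) ∈ U; G(p*, q*; ε, ω, γ, β*(ε,γ,ω)) = 0; and β* is unique in the sense that if |β′| < δ and there exists (p,q) ∈ U with q₁ = 0 and G(p, q; ε, ω, γ, β′) = 0, then β′ = β*(ε,γ,ω). -/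

import Mathlib

/-- The discrete Laplacian on `Fin N → ℝ` with the boundary conventions
`(Δx)_1 = x_2 − x_1`, `(Δx)_N = x_{N−1} − x_N`. -/
def lap {N : ℕ} (x : Fin N → ℝ) (j : Fin N) : ℝ :=
  (if h : j.val + 1 < N then x ⟨j.val + 1, h⟩ else x j)
  + (if 0 < j.val then x ⟨j.val - 1, lt_of_le_of_lt (Nat.sub_le _ _) j.isLt⟩ else x j)
  - 2 * x j

/-- The damped and driven dNLS vector field in the rotating frame, in real
coordinates `(p, q)`, with parameters `ε, ω, γ, β`. -/
def G (N : ℕ) (ε ω γ β : ℝ) (u : (Fin N → ℝ) × (Fin N → ℝ)) :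
    (Fin N → ℝ) × (Fin N → ℝ) :=
  (fun j => ε * lap u.2 j + ω * u.2 j - (u.1 j ^ 2 + u.2 j ^ 2) * u.2 j
      + (if j.val = 0 then β * u.1 j else 0)
      - (if j.val = N - 1 then γ * u.1 j else 0),
   fun j => -(ε * lap u.1 j) - ω * u.1 j + (u.1 j ^ 2 + u.2 j ^ 2) * u.1 j
      + (if j.val = 0 then β * u.2 j else 0)
      - (if j.val = N - 1 then γ * u.2 j else 0))

namespace Breather

abbrev Xsp : Type := ℝ × ℝ × ℝ
abbrev Usp (N : ℕ) : Type := (Fin N → ℝ) × (Fin N → ℝ)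
abbrev Wsp (N : ℕ) : Type := Xsp × (ℝ × Usp N)
abbrev Zsp (N : ℕ) : Type := Xsp × (Usp N × ℝ)

noncomputable def mkCLM {N : ℕ} (f : Wsp N → ℝ)
    (h1 : ∀ a b, f (a + b) = f a + f b)
    (h2 : ∀ (c : ℝ) a, f (c • a) = c * f a) : Wsp N →L[ℝ] ℝ :=
  LinearMap.toContinuousLinearMap ⟨⟨f, h1⟩, h2⟩

lemma lap_add {N : ℕ} (x y : Fin N → ℝ) (j : Fin N) :
    lap (x + y) j = lap x j + lap y j := by
  simp only [lap, Pi.add_apply]; split_ifs <;> ring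

lemma lap_smul {N : ℕ} (c : ℝ) (x : Fin N → ℝ) (j : Fin N) :
    lap (c • x) j = c * lap x j := by
  simp only [lap, Pi.smul_apply, smul_eq_mul]; split_ifs <;> ring

variable {N : ℕ}

noncomputable def cE : Wsp N →L[ℝ] ℝ := mkCLM (fun z => z.1.1) (fun _ _ => rfl) (fun _ _ => rfl)
noncomputable def cG : Wsp N →L[ℝ] ℝ := mkCLM (fun z => z.1.2.1) (fun _ _ => rfl) (fun _ _ => rfl)
noncomputable def cC : Wsp N →L[ℝ] ℝ := mkCLM (fun z => z.1.2.2) (fun _ _ => rfl) (fun _ _ => rfl)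
noncomputable def cB : Wsp N →L[ℝ] ℝ := mkCLM (fun z => z.2.1) (fun _ _ => rfl) (fun _ _ => rfl)
noncomputable def cP (j : Fin N) : Wsp N →L[ℝ] ℝ :=
  mkCLM (fun z => z.2.2.1 j) (fun _ _ => rfl) (fun _ _ => rfl)
noncomputable def cQ (j : Fin N) : Wsp N →L[ℝ] ℝ :=
  mkCLM (fun z => z.2.2.2 j) (fun _ _ => rfl) (fun _ _ => rfl)
noncomputable def cLP (j : Fin N) : Wsp N →L[ℝ] ℝ :=
  mkCLM (fun z => lap z.2.2.1 j) (fun _ _ => lap_add _ _ _) (fun _ _ => lap_smul _ _ _)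
noncomputable def cLQ (j : Fin N) : Wsp N →L[ℝ] ℝ :=
  mkCLM (fun z => lap z.2.2.2 j) (fun _ _ => lap_add _ _ _) (fun _ _ => lap_smul _ _ _)

@[simp] lemma mkCLM_apply (f : Wsp N → ℝ) (h1) (h2) (z : Wsp N) : mkCLM f h1 h2 z = f z := rfl

def e0 (N : ℕ) : Fin N → ℝ := fun j => if j.val = 0 then 1 else 0

noncomputable def z₀ (N : ℕ) : Wsp N := ((0, 0, 1), (0, (e0 N, 0)))

noncomputable def Dp (j : Fin N) : Wsp N →L[ℝ] ℝ := if j.val = 0 then cB else cQ j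

noncomputable def Dq (j : Fin N) : Wsp N →L[ℝ] ℝ :=
  -(lap (e0 N) j • cE) - (if j.val = 0 then cC else 0)
    + (if j.val = 0 then (2 : ℝ) • cP j else -(cP j))

noncomputable def Lle (hN : 2 ≤ N) : Wsp N ≃ₗ[ℝ] Zsp N where
  toFun v := (v.1, ((fun j => Dp j v, fun j => Dq j v), v.2.2.2 ⟨0, lt_of_lt_of_le two_pos hN⟩))
  invFun w := (w.1, (w.2.1.1 ⟨0, lt_of_lt_of_le two_pos hN⟩,
    (fun j => if j.val = 0 then (w.2.1.2 j + w.1.1 * lap (e0 N) j + w.1.2.2) / 2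
              else -(w.2.1.2 j + w.1.1 * lap (e0 N) j),
     fun j => if j.val = 0 then w.2.2 else w.2.1.1 j)))
  map_add' a b :=
    Prod.ext rfl (Prod.ext (Prod.ext (funext fun j => (Dp j).map_add a b)
      (funext fun j => (Dq j).map_add a b)) rfl)
  map_smul' c a :=
    Prod.ext rfl (Prod.ext (Prod.ext (funext fun j => (Dp j).map_smul c a)
      (funext fun j => (Dq j).map_smul c a)) rfl)
  left_inv v := by
    refine Prod.ext rfl (Prod.ext ?_ (Prod.ext ?_ ?_))
    · dsimp only
      simp [Dp, cB]
    · funext j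
      rcases j with ⟨jv, hlt⟩
      dsimp only
      by_cases hj : jv = 0 <;>
        simp [Dp, Dq, cB, cQ, cC, cE, cP, hj] <;> ring
    · funext j
      rcases j with ⟨jv, hlt⟩
      dsimp only
      by_cases hj : jv = 0 <;>
        simp [Dp, Dq, cB, cQ, cC, cE, cP, hj]
  right_inv w := by
    refine Prod.ext rfl (Prod.ext (Prod.ext ?_ ?_) ?_)
    · funext j
      rcases j with ⟨jv, hlt⟩
      dsimp only
      by_cases hj : jv = 0 <;>
        simp [Dp, Dq, cB, cQ, cC, cE, cP, hj]
    · funext j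
      rcases j with ⟨jv, hlt⟩
      dsimp only
      by_cases hj : jv = 0 <;>
        simp [Dp, Dq, cB, cQ, cC, cE, cP, hj] <;> ring
    · dsimp only
      simp

noncomputable def Lce (hN : 2 ≤ N) : Wsp N ≃L[ℝ] Zsp N :=
  (Lle hN).toContinuousLinearEquiv

noncomputable def Psi (N : ℕ) (hN : 2 ≤ N) (z : Wsp N) : Zsp N :=
  (z.1, (G N z.1.1 z.1.2.2 z.1.2.1 z.2.1 z.2.2, z.2.2.2 ⟨0, lt_of_lt_of_le two_pos hN⟩))

theorem hsfd_congr {E F : Type*} [NormedAddCommGroup E] [NormedSpace ℝ E]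
    [NormedAddCommGroup F] [NormedSpace ℝ F] {f g : E → F} {D D' : E →L[ℝ] F} {x : E}
    (h : HasStrictFDerivAt f D x) (hfg : ∀ z, g z = f z) (hD : ∀ v, D' v = D v) :
    HasStrictFDerivAt g D' x := by
  have h1 : g = f := funext hfg
  have h2 : D' = D := ContinuousLinearMap.ext hD
  rw [h1, h2]; exact h

lemma hGp (hN : 2 ≤ N) (j : Fin N) :
    HasStrictFDerivAt (fun z : Wsp N =>
      z.1.1 * lap z.2.2.2 j + z.1.2.2 * z.2.2.2 j
        - (z.2.2.1 j ^ 2 + z.2.2.2 j ^ 2) * z.2.2.2 j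
        + (if j.val = 0 then z.2.1 * z.2.2.1 j else 0)
        - (if j.val = N - 1 then z.1.2.1 * z.2.2.1 j else 0)) (Dp j) (z₀ N) := by
  have hE : HasStrictFDerivAt (fun z : Wsp N => z.1.1) cE (z₀ N) := cE.hasStrictFDerivAt
  have hG' : HasStrictFDerivAt (fun z : Wsp N => z.1.2.1) cG (z₀ N) := cG.hasStrictFDerivAt
  have hC : HasStrictFDerivAt (fun z : Wsp N => z.1.2.2) cC (z₀ N) := cC.hasStrictFDerivAt
  have hB : HasStrictFDerivAt (fun z : Wsp N => z.2.1) cB (z₀ N) := cB.hasStrictFDerivAt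
  have hP : HasStrictFDerivAt (fun z : Wsp N => z.2.2.1 j) (cP j) (z₀ N) :=
    (cP j).hasStrictFDerivAt
  have hQ : HasStrictFDerivAt (fun z : Wsp N => z.2.2.2 j) (cQ j) (z₀ N) :=
    (cQ j).hasStrictFDerivAt
  have hLQ : HasStrictFDerivAt (fun z : Wsp N => lap z.2.2.2 j) (cLQ j) (z₀ N) :=
    (cLQ j).hasStrictFDerivAt
  have base := ((hE.mul hLQ).add (hC.mul hQ)).sub (((hP.mul hP).add (hQ.mul hQ)).mul hQ)
  by_cases hj0 : j.val = 0
  · have hjN : ¬(j.val = N - 1) := by omega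
    refine hsfd_congr (base.add (hB.mul hP)) ?_ ?_
    · intro z
      simp only [if_pos hj0, if_neg hjN, sub_zero, Pi.add_apply, Pi.sub_apply, Pi.mul_apply, Pi.pow_apply, Pi.neg_apply]
      ring
    · intro v
      simp [Dp, hj0, z₀, e0, cB, cE, cC, cP, cQ, cLQ, lap]
  · by_cases hjN : j.val = N - 1
    · refine hsfd_congr (base.sub (hG'.mul hP)) ?_ ?_
      · intro z
        simp only [if_pos hjN, if_neg hj0, add_zero, Pi.add_apply, Pi.sub_apply, Pi.mul_apply, Pi.pow_apply, Pi.neg_apply]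
        ring
      · intro v
        simp [Dp, hj0, z₀, e0, cG, cE, cC, cP, cQ, cLQ, lap]
    · refine hsfd_congr base ?_ ?_
      · intro z
        simp only [if_neg hjN, if_neg hj0, add_zero, sub_zero, Pi.add_apply, Pi.sub_apply, Pi.mul_apply, Pi.pow_apply, Pi.neg_apply]
        ring
      · intro v
        simp [Dp, hj0, z₀, e0, cE, cC, cP, cQ, cLQ, lap]

lemma hGq (hN : 2 ≤ N) (j : Fin N) :
    HasStrictFDerivAt (fun z : Wsp N =>
      -(z.1.1 * lap z.2.2.1 j) - z.1.2.2 * z.2.2.1 j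
        + (z.2.2.1 j ^ 2 + z.2.2.2 j ^ 2) * z.2.2.1 j
        + (if j.val = 0 then z.2.1 * z.2.2.2 j else 0)
        - (if j.val = N - 1 then z.1.2.1 * z.2.2.2 j else 0)) (Dq j) (z₀ N) := by
  have hE : HasStrictFDerivAt (fun z : Wsp N => z.1.1) cE (z₀ N) := cE.hasStrictFDerivAt
  have hG' : HasStrictFDerivAt (fun z : Wsp N => z.1.2.1) cG (z₀ N) := cG.hasStrictFDerivAt
  have hC : HasStrictFDerivAt (fun z : Wsp N => z.1.2.2) cC (z₀ N) := cC.hasStrictFDerivAt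
  have hB : HasStrictFDerivAt (fun z : Wsp N => z.2.1) cB (z₀ N) := cB.hasStrictFDerivAt
  have hP : HasStrictFDerivAt (fun z : Wsp N => z.2.2.1 j) (cP j) (z₀ N) :=
    (cP j).hasStrictFDerivAt
  have hQ : HasStrictFDerivAt (fun z : Wsp N => z.2.2.2 j) (cQ j) (z₀ N) :=
    (cQ j).hasStrictFDerivAt
  have hLP : HasStrictFDerivAt (fun z : Wsp N => lap z.2.2.1 j) (cLP j) (z₀ N) :=
    (cLP j).hasStrictFDerivAt
  have base := (((hE.mul hLP).neg).sub (hC.mul hP)).add (((hP.mul hP).add (hQ.mul hQ)).mul hP)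
  by_cases hj0 : j.val = 0
  · have hjN : ¬(j.val = N - 1) := by omega
    refine hsfd_congr (base.add (hB.mul hQ)) ?_ ?_
    · intro z
      simp only [if_pos hj0, if_neg hjN, sub_zero, Pi.add_apply, Pi.sub_apply, Pi.mul_apply, Pi.pow_apply, Pi.neg_apply]
      ring
    · intro v
      simp [Dq, hj0, z₀, e0, cB, cE, cC, cP, cQ, cLP]
      ring
  · by_cases hjN : j.val = N - 1
    · refine hsfd_congr (base.sub (hG'.mul hQ)) ?_ ?_
      · intro z
        simp only [if_pos hjN, if_neg hj0, add_zero, Pi.add_apply, Pi.sub_apply, Pi.mul_apply, Pi.pow_apply, Pi.neg_apply]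
        ring
      · intro v
        simp [Dq, hj0, z₀, e0, cG, cE, cC, cP, cQ, cLP]
        ring
    · refine hsfd_congr base ?_ ?_
      · intro z
        simp only [if_neg hjN, if_neg hj0, add_zero, sub_zero, Pi.add_apply, Pi.sub_apply, Pi.mul_apply, Pi.pow_apply, Pi.neg_apply]
        ring
      · intro v
        simp [Dq, hj0, z₀, e0, cE, cC, cP, cQ, cLP]
        ring

noncomputable def cS (hN : 2 ≤ N) : Wsp N →L[ℝ] ℝ :=
  mkCLM (fun z => z.2.2.2 ⟨0, lt_of_lt_of_le two_pos hN⟩) (fun _ _ => rfl) (fun _ _ => rfl)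

lemma hasStrictPsi (hN : 2 ≤ N) :
    HasStrictFDerivAt (Psi N hN) (Lce hN : Wsp N →L[ℝ] Zsp N) (z₀ N) := by
  have h1 : HasStrictFDerivAt (fun z : Wsp N => z.1)
      (ContinuousLinearMap.fst ℝ Xsp (ℝ × Usp N)) (z₀ N) :=
    (ContinuousLinearMap.fst ℝ Xsp (ℝ × Usp N)).hasStrictFDerivAt
  have hp : HasStrictFDerivAt (fun (z : Wsp N) (j : Fin N) =>
      z.1.1 * lap z.2.2.2 j + z.1.2.2 * z.2.2.2 j
        - (z.2.2.1 j ^ 2 + z.2.2.2 j ^ 2) * z.2.2.2 j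
        + (if j.val = 0 then z.2.1 * z.2.2.1 j else 0)
        - (if j.val = N - 1 then z.1.2.1 * z.2.2.1 j else 0))
      (ContinuousLinearMap.pi (fun j => Dp j)) (z₀ N) :=
    hasStrictFDerivAt_pi.2 (fun j => hGp hN j)
  have hq : HasStrictFDerivAt (fun (z : Wsp N) (j : Fin N) =>
      -(z.1.1 * lap z.2.2.1 j) - z.1.2.2 * z.2.2.1 j
        + (z.2.2.1 j ^ 2 + z.2.2.2 j ^ 2) * z.2.2.1 j
        + (if j.val = 0 then z.2.1 * z.2.2.2 j else 0)
        - (if j.val = N - 1 then z.1.2.1 * z.2.2.2 j else 0))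
      (ContinuousLinearMap.pi (fun j => Dq j)) (z₀ N) :=
    hasStrictFDerivAt_pi.2 (fun j => hGq hN j)
  have hS : HasStrictFDerivAt (fun z : Wsp N => z.2.2.2 ⟨0, lt_of_lt_of_le two_pos hN⟩) (cS hN) (z₀ N) :=
    (cS hN).hasStrictFDerivAt
  refine hsfd_congr (h1.prodMk ((hp.prodMk hq).prodMk hS)) ?_ ?_
  · intro z
    rfl
  · intro v
    rfl

lemma contDiffPsi (hN : 2 ≤ N) : ContDiff ℝ (⊤ : WithTop ℕ∞) (Psi N hN) := by
  have hE : ContDiff ℝ (⊤ : WithTop ℕ∞) (fun z : Wsp N => z.1.1) := cE.contDiff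
  have hG' : ContDiff ℝ (⊤ : WithTop ℕ∞) (fun z : Wsp N => z.1.2.1) := cG.contDiff
  have hC : ContDiff ℝ (⊤ : WithTop ℕ∞) (fun z : Wsp N => z.1.2.2) := cC.contDiff
  have hB : ContDiff ℝ (⊤ : WithTop ℕ∞) (fun z : Wsp N => z.2.1) := cB.contDiff
  have hP : ∀ j : Fin N, ContDiff ℝ (⊤ : WithTop ℕ∞) (fun z : Wsp N => z.2.2.1 j) :=
    fun j => (cP j).contDiff
  have hQ : ∀ j : Fin N, ContDiff ℝ (⊤ : WithTop ℕ∞) (fun z : Wsp N => z.2.2.2 j) :=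
    fun j => (cQ j).contDiff
  have hLP : ∀ j : Fin N, ContDiff ℝ (⊤ : WithTop ℕ∞) (fun z : Wsp N => lap z.2.2.1 j) :=
    fun j => (cLP j).contDiff
  have hLQ : ∀ j : Fin N, ContDiff ℝ (⊤ : WithTop ℕ∞) (fun z : Wsp N => lap z.2.2.2 j) :=
    fun j => (cLQ j).contDiff
  show ContDiff ℝ (⊤ : WithTop ℕ∞) (fun z : Wsp N =>
    ((z.1, ((fun j => z.1.1 * lap z.2.2.2 j + z.1.2.2 * z.2.2.2 j
        - (z.2.2.1 j ^ 2 + z.2.2.2 j ^ 2) * z.2.2.2 j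
        + (if j.val = 0 then z.2.1 * z.2.2.1 j else 0)
        - (if j.val = N - 1 then z.1.2.1 * z.2.2.1 j else 0),
      fun j => -(z.1.1 * lap z.2.2.1 j) - z.1.2.2 * z.2.2.1 j
        + (z.2.2.1 j ^ 2 + z.2.2.2 j ^ 2) * z.2.2.1 j
        + (if j.val = 0 then z.2.1 * z.2.2.2 j else 0)
        - (if j.val = N - 1 then z.1.2.1 * z.2.2.2 j else 0)),
      z.2.2.2 ⟨0, lt_of_lt_of_le two_pos hN⟩)) : Zsp N))
  refine ContDiff.prodMk contDiff_fst (ContDiff.prodMk (ContDiff.prodMk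
    (contDiff_pi.2 fun j => ?_) (contDiff_pi.2 fun j => ?_)) ((cS hN).contDiff))
  · have base := ((hE.mul (hLQ j)).add (hC.mul (hQ j))).sub
      ((((hP j).pow 2).add ((hQ j).pow 2)).mul (hQ j))
    by_cases hj0 : j.val = 0
    · have hjN : ¬(j.val = N - 1) := by omega
      simp only [if_pos hj0, if_neg hjN, sub_zero]
      exact base.add (hB.mul (hP j))
    · by_cases hjN : j.val = N - 1
      · simp only [if_pos hjN, if_neg hj0, add_zero]
        exact base.sub (hG'.mul (hP j))
      · simp only [if_neg hjN, if_neg hj0, add_zero, sub_zero]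
        exact base
  · have base := (((hE.mul (hLP j)).neg).sub (hC.mul (hP j))).add
      ((((hP j).pow 2).add ((hQ j).pow 2)).mul (hP j))
    by_cases hj0 : j.val = 0
    · have hjN : ¬(j.val = N - 1) := by omega
      simp only [if_pos hj0, if_neg hjN, sub_zero]
      exact base.add (hB.mul (hQ j))
    · by_cases hjN : j.val = N - 1
      · simp only [if_pos hjN, if_neg hj0, add_zero]
        exact base.sub (hG'.mul (hQ j))
      · simp only [if_neg hjN, if_neg hj0, add_zero, sub_zero]
        exact base

lemma Psi_z₀ (hN : 2 ≤ N) : Psi N hN (z₀ N) = (((0, 0, 1) : Xsp), 0) := by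
  unfold Psi G z₀
  refine Prod.ext rfl (Prod.ext (Prod.ext ?_ ?_) rfl)
  · funext j
    simp [e0]
  · funext j
    simp only [Pi.zero_apply]
    by_cases hj : j.val = 0 <;> by_cases hjN : j.val = N - 1 <;>
      simp [e0, hj, hjN, lap, show ¬(N - 1 = 0) from by omega]

end Breather

open Breather in
/-- Existence and uniqueness of the damped and driven breathers (Theorem 2.1). -/
theorem stmt_1 (N : ℕ) (hN : 2 ≤ N) :
    ∃ ε₀ > (0 : ℝ), ∃ γ₀ > (0 : ℝ), ∃ ΔΩ > (0 : ℝ),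
    ∃ U : Set ((Fin N → ℝ) × (Fin N → ℝ)),
      U ∈ nhds (((fun j => if j.val = 0 then (1 : ℝ) else 0), 0) :
        (Fin N → ℝ) × (Fin N → ℝ)) ∧
    ∃ δ > (0 : ℝ),
    ∃ βs : ℝ × ℝ × ℝ → ℝ, ∃ us : ℝ × ℝ × ℝ → (Fin N → ℝ) × (Fin N → ℝ),
      ContDiffOn ℝ (⊤ : ℕ∞) βs {x : ℝ × ℝ × ℝ | |x.1| < ε₀ ∧ |x.2.1| < γ₀ ∧ |x.2.2 - 1| < ΔΩ} ∧
      ContDiffOn ℝ (⊤ : ℕ∞) us {x : ℝ × ℝ × ℝ | |x.1| < ε₀ ∧ |x.2.1| < γ₀ ∧ |x.2.2 - 1| < ΔΩ} ∧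
      us (0, 0, 1) = ((fun j => if j.val = 0 then 1 else 0), 0) ∧
      ∀ x : ℝ × ℝ × ℝ, |x.1| < ε₀ → |x.2.1| < γ₀ → |x.2.2 - 1| < ΔΩ →
        (us x).2 ⟨0, by omega⟩ = 0 ∧
        us x ∈ U ∧
        G N x.1 x.2.2 x.2.1 (βs x) (us x) = 0 ∧
        ∀ β' : ℝ, |β'| < δ →
          (∃ u ∈ U, u.2 ⟨0, by omega⟩ = 0 ∧ G N x.1 x.2.2 x.2.1 β' u = 0) →
          β' = βs x := by
  classical
  have hΨ : ContDiff ℝ (⊤ : ℕ∞) (Psi N hN) := (contDiffPsi hN).of_le le_top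
  have hs : HasStrictFDerivAt (Psi N hN) (Lce hN : Wsp N →L[ℝ] Zsp N) (z₀ N) :=
    hasStrictPsi hN
  set Φ : OpenPartialHomeomorph (Wsp N) (Zsp N) := hs.toOpenPartialHomeomorph (Psi N hN) with hΦ
  have hΦcoe : (Φ : Wsp N → Zsp N) = Psi N hN := rfl
  have hz₀src : z₀ N ∈ Φ.source := hs.mem_toOpenPartialHomeomorph_source
  have himg : Psi N hN (z₀ N) ∈ Φ.target := hs.image_mem_toOpenPartialHomeomorph_target
  have hPz₀ : Psi N hN (z₀ N) = (((0, 0, 1) : Xsp), 0) := Psi_z₀ hN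
  have hsym : Φ.symm (Psi N hN (z₀ N)) = z₀ N := Φ.left_inv hz₀src
  -- smoothness of the local inverse near the base image point
  have hψct : ContDiffAt ℝ (⊤ : ℕ∞) Φ.symm (Psi N hN (z₀ N)) := by
    refine Φ.contDiffAt_symm (f₀' := Lce hN) himg ?_ ?_
    · rw [hsym]; exact hs.hasFDerivAt
    · rw [hsym]; exact hΨ.contDiffAt
  have hev : ∀ᶠ w in nhds (Psi N hN (z₀ N)), ContDiffAt ℝ (⊤ : ℕ∞) Φ.symm w :=
    by
      have hω : ContDiffAt ℝ (⊤ : WithTop ℕ∞) Φ.symm (Psi N hN (z₀ N)) := by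
        refine Φ.contDiffAt_symm (f₀' := Lce hN) himg ?_ ?_
        · rw [hsym]; exact hs.hasFDerivAt
        · rw [hsym]; exact (contDiffPsi hN).contDiffAt
      exact (hω.eventually (by simp)).mono fun w hw => hw.of_le le_top
  rcases eventually_nhds_iff.1 hev with ⟨sψ, hsψ₁, hsψo, hsψmem⟩
  -- product neighborhoods inside the source
  have hsrc : Φ.source ∈ nhds (z₀ N) := Φ.open_source.mem_nhds hz₀src
  rcases mem_nhds_prod_iff'.1 hsrc with ⟨t1, t2, ht1o, ht1m, ht2o, ht2m, hts⟩
  rcases mem_nhds_prod_iff'.1 (ht2o.mem_nhds ht2m) with ⟨tβ, tu, htβo, htβm, htuo, htum, htu⟩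
  rcases Metric.isOpen_iff.1 htβo 0 htβm with ⟨δ, hδpos, hδsub⟩
  -- the good parameter set
  set O : Set (Zsp N) := Φ.target ∩ Φ.symm ⁻¹' (t1 ×ˢ (tβ ×ˢ tu)) with hO
  have hOopen : IsOpen O := Φ.isOpen_inter_preimage_symm (ht1o.prod (htβo.prod htuo))
  set Sx : Set Xsp := t1 ∩ (fun x : Xsp => ((x, 0) : Zsp N)) ⁻¹' (O ∩ sψ) with hSx
  have hSxopen : IsOpen Sx :=
    ht1o.inter ((hOopen.inter hsψo).preimage (continuous_id.prodMk continuous_const))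
  have hkey : Φ.symm (((0, 0, 1) : Xsp), (0 : Usp N × ℝ)) = z₀ N := by
    rw [← hPz₀]; exact hsym
  have hx₀Sx : ((0, 0, 1) : Xsp) ∈ Sx := by
    constructor
    · exact ht1m
    · refine ⟨⟨?_, ?_⟩, ?_⟩
      · show (((0, 0, 1) : Xsp), (0 : Usp N × ℝ)) ∈ Φ.target
        rw [← hPz₀]; exact himg
      · show Φ.symm (((0, 0, 1) : Xsp), (0 : Usp N × ℝ)) ∈ t1 ×ˢ (tβ ×ˢ tu)
        rw [hkey]
        exact Set.mem_prod.2 ⟨ht1m, Set.mem_prod.2 ⟨htβm, htum⟩⟩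
      · show (((0, 0, 1) : Xsp), (0 : Usp N × ℝ)) ∈ sψ
        rw [← hPz₀]; exact hsψmem
  rcases Metric.isOpen_iff.1 hSxopen _ hx₀Sx with ⟨r, hrpos, hrsub⟩
  -- the box is inside Sx
  have hbox : ∀ x : ℝ × ℝ × ℝ, |x.1| < r → |x.2.1| < r → |x.2.2 - 1| < r → x ∈ Sx := by
    intro x h1 h2 h3
    apply hrsub
    rw [Metric.mem_ball, Prod.dist_eq, Prod.dist_eq]
    rw [Real.dist_eq, Real.dist_eq, Real.dist_eq]
    simp only [sub_zero]
    exact max_lt h1 (max_lt h2 h3)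
  refine ⟨r, hrpos, r, hrpos, r, hrpos, tu, htuo.mem_nhds htum, δ, hδpos,
    (fun x => (Φ.symm (x, 0)).2.1), (fun x => (Φ.symm (x, 0)).2.2), ?_, ?_, ?_, ?_⟩
  · -- smoothness of βs
    have hψOn : ContDiffOn ℝ (⊤ : ℕ∞) Φ.symm sψ := fun w hw => (hsψ₁ w hw).contDiffWithinAt
    have hinl : ContDiff ℝ (⊤ : WithTop ℕ∞) (fun x : Xsp => ((x, 0) : Zsp N)) :=
      contDiff_id.prodMk contDiff_const
    have hmaps : Set.MapsTo (fun x : Xsp => ((x, 0) : Zsp N))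
        {x : ℝ × ℝ × ℝ | |x.1| < r ∧ |x.2.1| < r ∧ |x.2.2 - 1| < r} sψ := by
      intro x hx
      exact ((hbox x hx.1 hx.2.1 hx.2.2).2).2
    have hys : ContDiffOn ℝ (⊤ : ℕ∞) (fun x : Xsp => Φ.symm (x, 0))
        {x : ℝ × ℝ × ℝ | |x.1| < r ∧ |x.2.1| < r ∧ |x.2.2 - 1| < r} :=
      hψOn.comp (hinl.contDiffOn.of_le le_top) hmaps
    exact (cB (N := N)).contDiff.comp_contDiffOn hys
  · -- smoothness of us
    have hψOn : ContDiffOn ℝ (⊤ : ℕ∞) Φ.symm sψ := fun w hw => (hsψ₁ w hw).contDiffWithinAt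
    have hinl : ContDiff ℝ (⊤ : WithTop ℕ∞) (fun x : Xsp => ((x, 0) : Zsp N)) :=
      contDiff_id.prodMk contDiff_const
    have hmaps : Set.MapsTo (fun x : Xsp => ((x, 0) : Zsp N))
        {x : ℝ × ℝ × ℝ | |x.1| < r ∧ |x.2.1| < r ∧ |x.2.2 - 1| < r} sψ := by
      intro x hx
      exact ((hbox x hx.1 hx.2.1 hx.2.2).2).2
    have hys : ContDiffOn ℝ (⊤ : ℕ∞) (fun x : Xsp => Φ.symm (x, 0))
        {x : ℝ × ℝ × ℝ | |x.1| < r ∧ |x.2.1| < r ∧ |x.2.2 - 1| < r} :=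
      hψOn.comp (hinl.contDiffOn.of_le le_top) hmaps
    exact ((ContinuousLinearMap.snd ℝ ℝ (Usp N)).comp
      (ContinuousLinearMap.snd ℝ Xsp (ℝ × Usp N))).contDiff.comp_contDiffOn hys
  · -- value at the base point
    show (Φ.symm (((0, 0, 1) : Xsp), (0 : Usp N × ℝ))).2.2 = _
    rw [hkey]
    rfl
  · intro x h1 h2 h3
    have hxSx := hbox x h1 h2 h3
    have hxt1 : x ∈ t1 := hxSx.1
    have hxO : ((x, 0) : Zsp N) ∈ O := hxSx.2.1
    set a : Wsp N := Φ.symm (x, 0) with ha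
    have haprod : a ∈ t1 ×ˢ (tβ ×ˢ tu) := hxO.2
    have hasrc : a ∈ Φ.source := Φ.map_target hxO.1
    have hPa : Psi N hN a = (x, 0) := Φ.right_inv hxO.1
    have ha1 : a.1 = x := congrArg Prod.fst hPa
    have hGa : G N a.1.1 a.1.2.2 a.1.2.1 a.2.1 a.2.2 = 0 := by
      have := congrArg (fun w : Zsp N => w.2.1) hPa
      exact this
    have hq0a : a.2.2.2 ⟨0, by omega⟩ = 0 := by
      have := congrArg (fun w : Zsp N => w.2.2) hPa
      exact this
    rw [ha1] at hGa
    refine ⟨hq0a, haprod.2.2, hGa, ?_⟩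
    intro β' hβ' ⟨u, huU, huq0, hGu⟩
    set w : Wsp N := (x, (β', u)) with hw
    have hwsrc : w ∈ Φ.source := by
      apply hts
      refine Set.mem_prod.2 ⟨hxt1, htu (Set.mem_prod.2 ⟨hδsub ?_, huU⟩)⟩
      rw [Metric.mem_ball, Real.dist_eq, sub_zero]
      exact hβ'
    have hPw : Psi N hN w = (x, 0) := by
      unfold Psi
      refine Prod.ext rfl (Prod.ext ?_ ?_)
      · exact hGu
      · exact huq0
    have hwa : w = a := Φ.injOn hwsrc hasrc (hPw.trans hPa.symm)
    have : w.2.1 = a.2.1 := congrArg (fun z : Wsp N => z.2.1) hwa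
    exact this
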